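/- arXiv:math/0402320 — 8 statements merged into one kernel-verified Lean document; each statement's English description precedes it below -/
import Mathlib

section
/- If γ is a (k+1)-core and ρ(γ) is the set of cells of γ whose hook length exceeds k, then the row lengths of the skew diagram γ/ρ(γ) weakly decrease from bottom to top (i.e., the number of cells of γ with k-bounded hook length in row i is weakly decreasing in i). -/
open scoped Classical

/-- A partition given as a weakly decreasing, finitely supported
function `ℕ → ℕ` (row `i`, counted from the bottom, has `p i` cells). -/
def IsPartitionFun (p : ℕ → ℕ) : Prop :=
  (∀ i, p (i + 1) ≤ p i) ∧ ∃ N, ∀ i, N ≤ i → p i = 0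

/-- Hook length of the square `(i, j)` (0-indexed) in the partition `p`. -/
noncomputable def hookLen (p : ℕ → ℕ) (i j : ℕ) : ℕ :=
  (p i - j) + Set.ncard {i' : ℕ | i < i' ∧ j < p i'}

/-- A partition is an `m`-core if no cell has hook length `m`. -/
def IsCore (m : ℕ) (p : ℕ → ℕ) : Prop :=
  ∀ i j, j < p i → hookLen p i j ≠ m

/-- Number of cells of row `i` of `p` whose hook length is at most `k`. -/
noncomputable def rowKB (k : ℕ) (p : ℕ → ℕ) (i : ℕ) : ℕ :=
  Set.ncard {j : ℕ | j < p i ∧ hookLen p i j ≤ k}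

/-- Number of cells of column `j` of `p` whose hook length is at most `k`. -/
noncomputable def colKB (k : ℕ) (p : ℕ → ℕ) (j : ℕ) : ℕ :=
  Set.ncard {i : ℕ | j < p i ∧ hookLen p i j ≤ k}

/-- The `(k+1)`-residue of the square `(i, j)`, namely `j - i mod (k+1)`. -/
def res (k i j : ℕ) : ZMod (k + 1) := (j : ZMod (k + 1)) - (i : ZMod (k + 1))

/-- The conjugate partition. -/
noncomputable def conjFun (p : ℕ → ℕ) (j : ℕ) : ℕ := Set.ncard {i : ℕ | j < p i}


lemma legSetFin (γ : ℕ → ℕ) (hpart : IsPartitionFun γ) (i j : ℕ) :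
    {i' : ℕ | i < i' ∧ j < γ i'}.Finite := by
  obtain ⟨N, hN⟩ := hpart.2
  apply Set.Finite.subset (Set.finite_Iio N)
  rintro x ⟨_, hx⟩
  simp only [Set.mem_Iio]
  by_contra h
  push_neg at h
  have := hN x h
  omega

lemma hook_anti (γ : ℕ → ℕ) (hpart : IsPartitionFun γ) (i : ℕ) {j j' : ℕ}
    (h : j ≤ j') : hookLen γ i j' ≤ hookLen γ i j := by
  unfold hookLen
  have h1 : γ i - j' ≤ γ i - j := Nat.sub_le_sub_left h _
  have h2 : Set.ncard {i' : ℕ | i < i' ∧ j' < γ i'} ≤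
      Set.ncard {i' : ℕ | i < i' ∧ j < γ i'} := by
    apply Set.ncard_le_ncard _ (legSetFin γ hpart i j)
    rintro x ⟨hx1, hx2⟩
    exact ⟨hx1, lt_of_le_of_lt h hx2⟩
  omega

lemma key_step (γ : ℕ → ℕ) (hpart : IsPartitionFun γ) (i m : ℕ)
    (hm : m ≤ γ (i + 1)) :
    hookLen γ i (γ i - m) ≤ hookLen γ (i + 1) (γ (i + 1) - m) + 1 := by
  have hle : γ (i + 1) ≤ γ i := hpart.1 i
  unfold hookLen
  have e1 : γ i - (γ i - m) = m := Nat.sub_sub_self (le_trans hm hle)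
  have e2 : γ (i + 1) - (γ (i + 1) - m) = m := Nat.sub_sub_self hm
  rw [e1, e2]
  have hsub : {i' : ℕ | i < i' ∧ γ i - m < γ i'} ⊆
      insert (i + 1) {i' : ℕ | i + 1 < i' ∧ γ (i + 1) - m < γ i'} := by
    rintro x ⟨hx1, hx2⟩
    rcases eq_or_lt_of_le (Nat.succ_le_of_lt hx1) with h | h
    · exact Or.inl h.symm
    · exact Or.inr ⟨h, lt_of_le_of_lt (Nat.sub_le_sub_right hle m) hx2⟩
  have hfin : ({i' : ℕ | i + 1 < i' ∧ γ (i + 1) - m < γ i'}).Finite :=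
    legSetFin γ hpart (i + 1) _
  have h1 := Set.ncard_le_ncard hsub (hfin.insert (i + 1))
  have h2 := Set.ncard_insert_le (i + 1) {i' : ℕ | i + 1 < i' ∧ γ (i + 1) - m < γ i'}
  omega

noncomputable def bddF (k : ℕ) (γ : ℕ → ℕ) (i : ℕ) : Finset ℕ :=
  (Finset.range (γ i)).filter (fun j => hookLen γ i j ≤ k)

lemma rowKB_eq (k : ℕ) (γ : ℕ → ℕ) (i : ℕ) : rowKB k γ i = (bddF k γ i).card := by
  rw [rowKB, ← Set.ncard_coe_finset]
  congr 1
  ext j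
  simp [bddF]

/-- In a `(k+1)`-core, the number of cells with `k`-bounded hook length in row `i`
weakly decreases from bottom to top. -/
theorem stmt0 (k : ℕ) (γ : ℕ → ℕ) (hpart : IsPartitionFun γ)
    (hcore : IsCore (k + 1) γ) :
    ∀ i, rowKB k γ (i + 1) ≤ rowKB k γ i := by
  intro i
  rw [rowKB_eq, rowKB_eq]
  set m := (bddF k γ (i + 1)).card with hm
  rcases Nat.eq_zero_or_pos m with h0 | h0
  · simp [h0]
  -- the bounded cells of row i+1 form a suffix starting at t = min'
  have hne : (bddF k γ (i + 1)).Nonempty := Finset.card_pos.mp h0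
  set t := (bddF k γ (i + 1)).min' hne with ht
  have htmem : t ∈ bddF k γ (i + 1) := Finset.min'_mem _ _
  have htlt : t < γ (i + 1) := by
    have := htmem; simp only [bddF, Finset.mem_filter, Finset.mem_range] at this
    exact this.1
  have hthk : hookLen γ (i + 1) t ≤ k := by
    have := htmem; simp only [bddF, Finset.mem_filter, Finset.mem_range] at this
    exact this.2
  have hEq : bddF k γ (i + 1) = Finset.Ico t (γ (i + 1)) := by
    apply Finset.Subset.antisymm
    · intro j hj
      have hj' := hj
      simp only [bddF, Finset.mem_filter, Finset.mem_range] at hj'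
      exact Finset.mem_Ico.mpr ⟨Finset.min'_le _ _ hj, hj'.1⟩
    · intro j hj
      rw [Finset.mem_Ico] at hj
      simp only [bddF, Finset.mem_filter, Finset.mem_range]
      exact ⟨hj.2, le_trans (hook_anti γ hpart (i + 1) hj.1) hthk⟩
  have hcard : m = γ (i + 1) - t := by rw [hm, hEq, Nat.card_Ico]
  have htval : t = γ (i + 1) - m := by omega
  have hmle : m ≤ γ (i + 1) := by omega
  have hle : γ (i + 1) ≤ γ i := hpart.1 i
  -- The hook of cell (i, γ i - m) is at most k
  have hkey : hookLen γ i (γ i - m) ≤ k + 1 := by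
    have := key_step γ hpart i m hmle
    rw [← htval] at this
    omega
  have hlt : γ i - m < γ i := by omega
  have hne' : hookLen γ i (γ i - m) ≠ k + 1 := hcore i (γ i - m) hlt
  have hbd : hookLen γ i (γ i - m) ≤ k := by omega
  -- so row i contains the suffix of length m
  have hsub : Finset.Ico (γ i - m) (γ i) ⊆ bddF k γ i := by
    intro j hj
    rw [Finset.mem_Ico] at hj
    simp only [bddF, Finset.mem_filter, Finset.mem_range]
    exact ⟨hj.2, le_trans (hook_anti γ hpart i hj.1) hbd⟩
  calc m = (Finset.Ico (γ i - m) (γ i)).card := by rw [Nat.card_Ico]; omega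
    _ ≤ (bddF k γ i).card := Finset.card_le_card hsub
end

section
/- Let γ be a partition and ρ ⊆ γ a subpartition. Suppose (a) every cell of γ not in ρ has hook length (in γ) at most k, and (b) every cell of ρ has skew hook length in γ/ρ exceeding k (where the skew hook of a square s counts cells of γ/ρ in the L with corner s). Then γ is a (k+1)-core and ρ consists exactly of the cells of γ with hook length exceeding k. -/
open scoped Classical

/-- The skew hook of the square `(i,j)`: the number of cells of `γ/ρ` lying in
row `i` weakly to the right of `(i,j)` or in column `j` strictly above `(i,j)`. -/
noncomputable def skewHook (ρ γ : ℕ → ℕ) (i j : ℕ) : ℕ :=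
  Set.ncard {j' : ℕ | j ≤ j' ∧ ρ i ≤ j' ∧ j' < γ i} +
  Set.ncard {i' : ℕ | i < i' ∧ ρ i' ≤ j ∧ j < γ i'}

/-- If every cell of `γ` outside `ρ` has hook length at most `k`, and every cell of
`ρ` has skew hook length in `γ/ρ` exceeding `k`, then `γ` is a `(k+1)`-core and `ρ`
consists exactly of the cells of `γ` with hook length exceeding `k`. -/
theorem stmt1 (k : ℕ) (ρ γ : ℕ → ℕ) (hρ : IsPartitionFun ρ) (hγ : IsPartitionFun γ)
    (hsub : ∀ i, ρ i ≤ γ i)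
    (ha : ∀ i j, ρ i ≤ j → j < γ i → hookLen γ i j ≤ k)
    (hb : ∀ i j, j < ρ i → k < skewHook ρ γ i j) :
    IsCore (k + 1) γ ∧ ∀ i j, j < γ i → (k < hookLen γ i j ↔ j < ρ i) := by
  obtain ⟨hγmono, N, hN⟩ := hγ
  have hLfin : ∀ i j : ℕ, {i' : ℕ | i < i' ∧ j < γ i'}.Finite := by
    intro i j
    apply Set.Finite.subset (Set.finite_Iio N)
    intro i' hi'
    simp only [Set.mem_setOf_eq] at hi'
    by_contra h
    simp only [Set.mem_Iio, not_lt] at h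
    have := hN i' h
    omega
  have key : ∀ i j, j < ρ i → skewHook ρ γ i j < hookLen γ i j := by
    intro i j hj
    have h1 : Set.ncard {j' : ℕ | j ≤ j' ∧ ρ i ≤ j' ∧ j' < γ i} < γ i - j := by
      have hsubs : {j' : ℕ | j ≤ j' ∧ ρ i ≤ j' ∧ j' < γ i} ⊆ ↑(Finset.Ico (ρ i) (γ i)) := by
        intro x hx
        simp only [Finset.coe_Ico, Set.mem_Ico]
        exact ⟨hx.2.1, hx.2.2⟩
      have hle := Set.ncard_le_ncard hsubs (Finset.Ico (ρ i) (γ i)).finite_toSet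
      rw [Set.ncard_coe_finset, Nat.card_Ico] at hle
      have h2 := hsub i
      omega
    have h2 : Set.ncard {i' : ℕ | i < i' ∧ ρ i' ≤ j ∧ j < γ i'} ≤
        Set.ncard {i' : ℕ | i < i' ∧ j < γ i'} := by
      apply Set.ncard_le_ncard _ (hLfin i j)
      intro x hx
      exact ⟨hx.1, hx.2.2⟩
    unfold skewHook hookLen
    omega
  have fwd : ∀ i j, j < γ i → k < hookLen γ i j → j < ρ i := by
    intro i j hjγ hk
    by_contra h
    push_neg at h
    exact absurd (ha i j h hjγ) (by omega)
  constructor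
  · intro i j hjγ heq
    have hjρ : j < ρ i := fwd i j hjγ (by omega)
    have h1 := key i j hjρ
    have h2 := hb i j hjρ
    omega
  · intro i j hjγ
    constructor
    · exact fwd i j hjγ
    · intro hjρ
      have h1 := key i j hjρ
      have h2 := hb i j hjρ
      omega
end

section
/- The map 𝔭 sending a (k+1)-core γ to the sequence (λ_1,…,λ_ℓ), where λ_i is the number of cells in row i of γ with hook length at most k, is a bijection from the set of (k+1)-cores onto the set of partitions whose parts are all at most k. -/
open scoped Classical

/-
Encode a partition `p` by its beta numbers `beta p i = p i - i`, a strictly decreasing sequence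
equal to `-i` for large `i`, and its columns by `gap p j = j + 1 - p'_j` (`p'` the conjugate).
These are the vertical and horizontal steps of the boundary of the diagram, so the two sequences
partition `ℤ`, and the hook length of the cell `(i, j)` is `beta p i - gap p j`.

Hence `p` is a `(k+1)`-core iff every `beta p i - (k + 1)` is again a beta number `beta p m`.
Among the `k` integers strictly between `beta p m` and `beta p i`, the gaps are the hooks `≤ k`
of row `i` and the beta numbers are those of rows `i < r < m`, so `m = i + (k + 1 - λ_i)` where
`λ = rowKB k p`. This recurrence and the tail `beta p i = -i` determine the beta numbers, hence
`p`, from `λ`; conversely, for any `k`-bounded `λ`, iterating `i ↦ i + (k + 1 - λ_i)` produces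
beta numbers satisfying the recurrence.
-/

def beta (p : ℕ → ℕ) (i : ℕ) : ℤ := p i - i

noncomputable def gap (p : ℕ → ℕ) (j : ℕ) : ℤ := j + 1 - conjFun p j

def nextRow (k : ℕ) (lam : ℕ → ℕ) (i : ℕ) : ℕ := i + (k + 1 - lam i)

theorem lt_nextRow {k : ℕ} {lam : ℕ → ℕ} {i : ℕ} (h : lam i ≤ k) : i < nextRow k lam i := by
  unfold nextRow
  omega

theorem eq_of_eventuallyEq_of_apply_sub {g : ℕ → ℕ} (hg : ∀ i, i < g i) {d : ℤ}
    {b b' : ℕ → ℤ} (hb : ∀ i, b (g i) = b i - d) (hb' : ∀ i, b' (g i) = b' i - d) {N : ℕ}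
    (htail : ∀ i, N ≤ i → b i = b' i) : b = b' := by
  have hagree : ∀ n i, N ≤ i + n → b i = b' i := by
    intro n
    induction n with
    | zero => exact htail
    | succ n ih =>
      intro i hi
      have := ih (g i) (by have := hg i; omega)
      have := hb i
      have := hb' i
      omega
  exact funext fun i => hagree N i (Nat.le_add_left N i)

theorem exists_strictAnti_apply_sub {g : ℕ → ℕ} (hg : StrictMono g) (hlt : ∀ i, i < g i)
    {N d : ℕ} (htail : ∀ i, N ≤ i → g i = i + d) :
    ∃ b : ℕ → ℤ, StrictAnti b ∧ (∀ i, N ≤ i → b i = -i) ∧ ∀ i, b (g i) = b i - d := by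
  have hge : ∀ t i, i + t ≤ g^[t] i := by
    intro t
    induction t with
    | zero => simp
    | succ t ih =>
      intro i
      rw [Function.iterate_succ_apply']
      have := ih i
      have := hlt (g^[t] i)
      omega
  have hiter : ∀ t i, N ≤ i → g^[t] i = i + t * d := by
    intro t
    induction t with
    | zero => simp
    | succ t ih =>
      intro i hi
      rw [Function.iterate_succ_apply, htail i hi, ih _ (by omega)]
      ring
  -- `g^[N] i` lies in the region where `g` is translation by `d`.
  refine ⟨fun i => (d * N : ℤ) - g^[N] i, fun a b hab => ?_, fun i hi => ?_, fun i => ?_⟩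
  · have := hg.iterate N hab
    simp only
    omega
  · simp only [hiter N i hi]
    push_cast
    ring
  · simp only
    rw [← Function.iterate_succ_apply, Function.iterate_succ_apply',
      htail _ (by have := hge N i; omega)]
    push_cast
    ring

theorem exists_isPartitionFun_beta_eq {b : ℕ → ℤ} (hb : StrictAnti b) {N : ℕ}
    (htail : ∀ i, N ≤ i → b i = -i) : ∃ p, IsPartitionFun p ∧ beta p = b := by
  have hanti : Antitone fun i => b i + i := antitone_nat_of_succ_le fun i => by
    have := hb (show i < i + 1 by omega)
    push_cast
    omega
  have hnonneg : ∀ i, 0 ≤ b i + i := fun i => by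
    have := hanti (Nat.le_add_right i N)
    have := htail (i + N) (Nat.le_add_left N i)
    push_cast at *
    omega
  refine ⟨fun i => (b i + i).toNat,
    ⟨fun i => Int.toNat_le_toNat (hanti i.le_succ), N, fun i hi => by simp [htail i hi]⟩,
    funext fun i => ?_⟩
  have := hnonneg i
  simp only [beta]
  omega

namespace IsPartitionFun

variable {p : ℕ → ℕ}

theorem antitone (hp : IsPartitionFun p) : Antitone p :=
  antitone_nat_of_succ_le hp.1

theorem lt_conjFun_iff (hp : IsPartitionFun p) {i j : ℕ} : i < conjFun p j ↔ j < p i := by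
  have hex : ∃ n, p n ≤ j := by
    obtain ⟨N, hN⟩ := hp.2
    exact ⟨N, by simp [hN N le_rfl]⟩
  have hrows : ∀ i, j < p i ↔ i < Nat.find hex := fun i =>
    ⟨fun h => not_le.1 fun hle => not_le.2 h ((hp.antitone hle).trans (Nat.find_spec hex)),
      fun h => not_le.1 (Nat.find_min hex h)⟩
  have hconj : conjFun p j = Nat.find hex := by
    have : {i | j < p i} = Set.Iio (Nat.find hex) := Set.ext hrows
    rw [conjFun, this, ← Finset.coe_Iio, Set.ncard_coe_finset, Nat.card_Iio]
  rw [hconj, hrows]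

theorem conjFun_antitone (hp : IsPartitionFun p) : Antitone (conjFun p) := by
  intro j j' hjj'
  by_contra h
  have := hp.lt_conjFun_iff.1 (not_le.1 h)
  exact lt_irrefl _ ((hp.lt_conjFun_iff (i := conjFun p j) (j := j)).2 (by omega))

theorem beta_strictAnti (hp : IsPartitionFun p) : StrictAnti (beta p) :=
  strictAnti_nat_of_succ_lt fun i => by
    have := hp.1 i
    simp only [beta]
    push_cast
    omega

theorem gap_strictMono (hp : IsPartitionFun p) : StrictMono (gap p) :=
  strictMono_nat_of_lt_succ fun j => by
    have := hp.conjFun_antitone (show j ≤ j + 1 by omega)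
    simp only [gap]
    push_cast
    omega

theorem gap_lt_beta (hp : IsPartitionFun p) {i j : ℕ} (h : j < p i) : gap p j < beta p i := by
  have := hp.lt_conjFun_iff.2 h
  simp only [gap, beta]
  omega

theorem beta_lt_gap (hp : IsPartitionFun p) {i j : ℕ} (h : p i ≤ j) : beta p i < gap p j := by
  have : conjFun p j ≤ i := not_lt.1 fun h' => not_lt.2 h (hp.lt_conjFun_iff.1 h')
  simp only [gap, beta]
  omega

theorem gap_lt_beta_iff (hp : IsPartitionFun p) {i j : ℕ} : gap p j < beta p i ↔ j < p i :=
  ⟨fun h => not_le.1 fun h' => (hp.beta_lt_gap h').asymm h, hp.gap_lt_beta⟩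

theorem beta_ne_gap (hp : IsPartitionFun p) (i j : ℕ) : beta p i ≠ gap p j := by
  rcases lt_or_ge j (p i) with h | h
  · exact (hp.gap_lt_beta h).ne'
  · exact (hp.beta_lt_gap h).ne

theorem hookLen_eq_beta_sub_gap (hp : IsPartitionFun p) {i j : ℕ} (h : j < p i) :
    (hookLen p i j : ℤ) = beta p i - gap p j := by
  have hleg : {i' | i < i' ∧ j < p i'} = Set.Ioo i (conjFun p j) := by
    ext i'
    simp [hp.lt_conjFun_iff]
  have := hp.lt_conjFun_iff.2 h
  rw [hookLen, hleg, ← Finset.coe_Ioo, Set.ncard_coe_finset, Nat.card_Ioo]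
  simp only [beta, gap]
  omega

theorem exists_beta_eq_or_gap_eq (hp : IsPartitionFun p) (x : ℤ) :
    (∃ i, beta p i = x) ∨ ∃ j, gap p j = x := by
  obtain ⟨N, hN⟩ := hp.2
  have hex : ∃ m, beta p m ≤ x :=
    ⟨N + (-x).toNat, by simp only [beta, hN _ (Nat.le_add_right _ _)]; omega⟩
  obtain ⟨m, h, hmin⟩ : ∃ m, beta p m ≤ x ∧ ∀ r < m, x < beta p r :=
    ⟨Nat.find hex, Nat.find_spec hex, fun r hr => not_le.1 (Nat.find_min hex hr)⟩
  rcases h.eq_or_lt with h | h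
  · exact Or.inl ⟨m, h⟩
  simp only [beta] at h
  -- `x` lies strictly between `beta p m` and `beta p (m - 1)`: it is the gap of column `x + m - 1`.
  have hbelow : ∀ r < m, x + m ≤ p r := fun r hr => by
    have hprev := hmin (m - 1) (by omega)
    have := hp.antitone (show r ≤ m - 1 by omega)
    simp only [beta] at hprev
    omega
  have hconj : conjFun p (x + m - 1).toNat = m := eq_of_forall_lt_iff fun r => by
    rw [hp.lt_conjFun_iff]
    constructor
    · intro hr
      by_contra hrm
      have := hp.antitone (not_lt.1 hrm)
      omega
    · intro hr
      have := hbelow r hr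
      omega
  right
  refine ⟨(x + m - 1).toNat, ?_⟩
  simp only [gap, hconj]
  omega

theorem rowKB_add_sub_eq (hp : IsPartitionFun p) {k i m : ℕ}
    (hm : beta p m = beta p i - (k + 1)) : rowKB k p i + (m - i) = k + 1 := by
  have hanti := hp.beta_strictAnti
  have him : i < m := hanti.lt_iff_gt.1 (by omega)
  have hwindow : Set.Ico (beta p i - k) (beta p i) =
      gap p '' {j | j < p i ∧ hookLen p i j ≤ k} ∪ beta p '' Set.Ioo i m := by
    ext x
    constructor
    · rintro ⟨hx₁, hx₂⟩
      rcases hp.exists_beta_eq_or_gap_eq x with ⟨r, rfl⟩ | ⟨j, rfl⟩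
      · exact Or.inr ⟨r, ⟨hanti.lt_iff_gt.1 hx₂, hanti.lt_iff_gt.1 (by omega)⟩, rfl⟩
      · have hj := hp.gap_lt_beta_iff.1 hx₂
        have := hp.hookLen_eq_beta_sub_gap hj
        exact Or.inl ⟨j, ⟨hj, by omega⟩, rfl⟩
    · rintro (⟨j, ⟨hj, hk⟩, rfl⟩ | ⟨r, ⟨hir, hrm⟩, rfl⟩)
      · have := hp.hookLen_eq_beta_sub_gap hj
        have := hp.gap_lt_beta hj
        constructor <;> omega
      · have := hanti hir
        have := hanti hrm
        constructor <;> omega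
  have hdisj : Disjoint (gap p '' {j | j < p i ∧ hookLen p i j ≤ k}) (beta p '' Set.Ioo i m) :=
    Set.disjoint_left.2 fun _ ⟨j, _, hj⟩ ⟨r, _, hr⟩ => hp.beta_ne_gap r j (hr.trans hj.symm)
  have hcard := congrArg Set.ncard hwindow
  rw [Set.ncard_union_eq hdisj (((Set.finite_Iio (p i)).subset fun _ hj => hj.1).image _)
      ((Set.finite_Ioo i m).image _),
    Set.ncard_image_of_injective _ hp.gap_strictMono.injective,
    Set.ncard_image_of_injective _ hanti.injective, ← Finset.coe_Ico, Set.ncard_coe_finset,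
    Int.card_Ico, ← Finset.coe_Ioo, Set.ncard_coe_finset, Nat.card_Ioo] at hcard
  rw [rowKB]
  omega

theorem isCore_iff (hp : IsPartitionFun p) {k : ℕ} :
    IsCore (k + 1) p ↔ ∀ i, ∃ m, beta p m = beta p i - (k + 1) := by
  constructor
  · intro hc i
    refine (hp.exists_beta_eq_or_gap_eq _).resolve_right ?_
    rintro ⟨j, hj⟩
    have hjp : j < p i := hp.gap_lt_beta_iff.1 (by omega)
    have := hp.hookLen_eq_beta_sub_gap hjp
    exact hc i j hjp (by omega)
  · intro h i j hj hhook
    obtain ⟨m, hm⟩ := h i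
    have := hp.hookLen_eq_beta_sub_gap hj
    exact hp.beta_ne_gap m j (by omega)

theorem rowKB_le_and_beta_nextRow (hp : IsPartitionFun p) {k : ℕ} (hc : IsCore (k + 1) p)
    (i : ℕ) : rowKB k p i ≤ k ∧ beta p (nextRow k (rowKB k p) i) = beta p i - (k + 1) := by
  obtain ⟨m, hm⟩ := hp.isCore_iff.1 hc i
  have him : i < m := hp.beta_strictAnti.lt_iff_gt.1 (by omega)
  have hcount := hp.rowKB_add_sub_eq hm
  have hnext : nextRow k (rowKB k p) i = m := by
    unfold nextRow
    omega
  exact ⟨by omega, hnext ▸ hm⟩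

theorem isPartitionFun_rowKB (hp : IsPartitionFun p) {k : ℕ} (hc : IsCore (k + 1) p) :
    IsPartitionFun (rowKB k p) := by
  refine ⟨fun i => ?_, ?_⟩
  · obtain ⟨hle, hi⟩ := hp.rowKB_le_and_beta_nextRow hc i
    obtain ⟨hle', hsucc⟩ := hp.rowKB_le_and_beta_nextRow hc (i + 1)
    have := hp.beta_strictAnti (show i < i + 1 by omega)
    have hlt : nextRow k (rowKB k p) i < nextRow k (rowKB k p) (i + 1) :=
      hp.beta_strictAnti.lt_iff_gt.1 (by omega)
    unfold nextRow at hlt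
    omega
  · obtain ⟨N, hN⟩ := hp.2
    exact ⟨N, fun i hi => by simp [rowKB, hN i hi]⟩

theorem eq_of_rowKB_eq (hp : IsPartitionFun p) {p' : ℕ → ℕ} (hp' : IsPartitionFun p') {k : ℕ}
    (hc : IsCore (k + 1) p) (hc' : IsCore (k + 1) p') (h : rowKB k p = rowKB k p') : p = p' := by
  obtain ⟨N, hN⟩ := hp.2
  obtain ⟨N', hN'⟩ := hp'.2
  have hbeta : beta p = beta p' :=
    eq_of_eventuallyEq_of_apply_sub (fun i => lt_nextRow (hp.rowKB_le_and_beta_nextRow hc i).1)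
      (fun i => (hp.rowKB_le_and_beta_nextRow hc i).2)
      (h ▸ fun i => (hp'.rowKB_le_and_beta_nextRow hc' i).2) (N := max N N')
      fun i hi => by simp [beta, hN i (le_of_max_le_left hi), hN' i (le_of_max_le_right hi)]
  funext i
  have := congrFun hbeta i
  simp only [beta] at this
  omega

end IsPartitionFun

theorem exists_isCore_rowKB_eq {k : ℕ} {lam : ℕ → ℕ} (hlam : IsPartitionFun lam)
    (hbd : ∀ i, lam i ≤ k) : ∃ p, IsPartitionFun p ∧ IsCore (k + 1) p ∧ rowKB k p = lam := by
  obtain ⟨N, hN⟩ := hlam.2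
  have hmono : StrictMono (nextRow k lam) := strictMono_nat_of_lt_succ fun i => by
    have := hlam.1 i
    have := hbd (i + 1)
    unfold nextRow
    omega
  obtain ⟨b, hb, htail, hrec⟩ := exists_strictAnti_apply_sub hmono (fun i => lt_nextRow (hbd i))
    (N := N) (d := k + 1) fun i hi => by simp [nextRow, hN i hi]
  obtain ⟨p, hp, rfl⟩ := exists_isPartitionFun_beta_eq hb htail
  have hrec' : ∀ i, beta p (nextRow k lam i) = beta p i - (k + 1) := by exact_mod_cast hrec
  refine ⟨p, hp, hp.isCore_iff.2 fun i => ⟨_, hrec' i⟩, funext fun i => ?_⟩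
  have hcount := hp.rowKB_add_sub_eq (hrec' i)
  have := hbd i
  unfold nextRow at hcount
  omega

/-- The map `𝔭` sending a `(k+1)`-core `γ` to the sequence whose `i`-th entry is the
number of cells with `k`-bounded hook in row `i` of `γ` is a bijection from
`(k+1)`-cores onto `k`-bounded partitions. -/
theorem stmt2 (k : ℕ) :
    ∃ f : {γ : ℕ → ℕ // IsPartitionFun γ ∧ IsCore (k + 1) γ} →
          {lam : ℕ → ℕ // IsPartitionFun lam ∧ ∀ i, lam i ≤ k},
      (∀ γ, ∀ i, (f γ).1 i = rowKB k γ.1 i) ∧ Function.Bijective f := by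
  refine ⟨fun γ => ⟨rowKB k γ.1, γ.2.1.isPartitionFun_rowKB γ.2.2,
    fun i => (γ.2.1.rowKB_le_and_beta_nextRow γ.2.2 i).1⟩, fun _ _ => rfl, ?_, ?_⟩
  · rintro ⟨p, hp, hc⟩ ⟨p', hp', hc'⟩ h
    exact Subtype.ext (hp.eq_of_rowKB_eq hp' hc hc' (congrArg Subtype.val h))
  · rintro ⟨lam, hlam, hbd⟩
    obtain ⟨p, hp, hc, hrow⟩ := exists_isCore_rowKB_eq hlam hbd
    exact ⟨⟨p, hp, hc⟩, Subtype.ext hrow⟩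
end

section
/- Let γ be a (k+1)-core and let c, c' be extremal cells of γ with the same (k+1)-residue, with c' weakly north-west of c. If c is the last cell in its row (no cell of γ to its right), then c' is also the last cell in its row. -/
open scoped Classical

/-- Galois connection between a partition and its conjugate. -/
lemma myGalois (γ : ℕ → ℕ) (hpart : IsPartitionFun γ) (c r : ℕ) :
    c < γ r ↔ r < conjFun γ c := by
  obtain ⟨hdec, N, hN⟩ := id hpart
  have hanti : Antitone γ := antitone_nat_of_succ_le hdec
  have hne : {r : ℕ | c < γ r}ᶜ.Nonempty := ⟨N, by simp [hN N le_rfl]⟩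
  have hnS : sInf {r : ℕ | c < γ r}ᶜ ∈ {r : ℕ | c < γ r}ᶜ := Nat.sInf_mem hne
  have hSeq : {r : ℕ | c < γ r} = Set.Iio (sInf {r : ℕ | c < γ r}ᶜ) := by
    ext s
    simp only [Set.mem_setOf_eq, Set.mem_Iio]
    constructor
    · intro hs
      by_contra h
      push_neg at h
      exact hnS (lt_of_lt_of_le hs (hanti h))
    · intro hs
      by_contra h
      exact absurd (Nat.sInf_le h) (not_le.mpr hs)
  have hconj : conjFun γ c = sInf {r : ℕ | c < γ r}ᶜ := by
    rw [conjFun]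
    conv_lhs => rw [hSeq]
    rw [← Finset.coe_Iio, Set.ncard_coe_finset, Nat.card_Iio]
  rw [hconj]
  have h := Set.ext_iff.mp hSeq r
  simpa using h

/-- The bead positions and gap positions are disjoint. -/
lemma myDisj (γ : ℕ → ℕ) (hpart : IsPartitionFun γ) (a c : ℕ) :
    ((γ a : ℤ) - 1 - a) ≠ ((c : ℤ) - conjFun γ c) := by
  intro h
  rcases lt_or_ge c (γ a) with hlt | hle
  · have h1 : a < conjFun γ c := (myGalois γ hpart c a).mp hlt
    omega
  · have h1 : conjFun γ c ≤ a := by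
      by_contra h2
      push_neg at h2
      exact absurd ((myGalois γ hpart c a).mpr h2) (not_lt.mpr hle)
    omega

/-- Every integer is a bead or a gap. -/
lemma myCover (γ : ℕ → ℕ) (hpart : IsPartitionFun γ) (z : ℤ) :
    (∃ a : ℕ, (γ a : ℤ) - 1 - a = z) ∨ (∃ c : ℕ, (c : ℤ) - conjFun γ c = z) := by
  by_cases hf : ∃ a : ℕ, (γ a : ℤ) - 1 - a = z
  · exact Or.inl hf
  right
  push_neg at hf
  obtain ⟨_, N, hN⟩ := id hpart
  set A : Set ℕ := {a | (γ a : ℤ) - 1 - a < z} with hAdef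
  have hAne : A.Nonempty := by
    refine ⟨N + z.natAbs + 1, ?_⟩
    simp only [hAdef, Set.mem_setOf_eq]
    rw [hN _ (by omega)]
    omega
  have ha0 : sInf A ∈ A := Nat.sInf_mem hAne
  rcases hA : sInf A with _ | a
  · rw [hA] at ha0
    have hz0 : (γ 0 : ℤ) - 1 < z := by simpa [hAdef] using ha0
    refine ⟨z.toNat, ?_⟩
    have hzt : ((z.toNat : ℕ) : ℤ) = z := Int.toNat_of_nonneg (by omega)
    have hc0 : conjFun γ z.toNat = 0 := by
      by_contra h
      have h2 : 0 < conjFun γ z.toNat := Nat.pos_of_ne_zero h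
      have := (myGalois γ hpart z.toNat 0).mpr h2
      omega
    rw [hc0]
    omega
  · rw [hA] at ha0
    have hz1 : (γ (a + 1) : ℤ) - 1 - (a + 1) < z := by simpa [hAdef] using ha0
    have haA : a ∉ A := fun h => absurd (Nat.sInf_le h) (by omega)
    have hz2 : z < (γ a : ℤ) - 1 - a := by
      have h3 : ¬ ((γ a : ℤ) - 1 - a < z) := by simpa [hAdef] using haA
      have h4 := hf a
      omega
    refine ⟨(z + a + 1).toNat, ?_⟩
    have hzt : (((z + a + 1).toNat : ℕ) : ℤ) = z + a + 1 := Int.toNat_of_nonneg (by omega)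
    have hlt : (z + a + 1).toNat < γ a := by omega
    have hge : γ (a + 1) ≤ (z + a + 1).toNat := by omega
    have h5 : a < conjFun γ (z + a + 1).toNat := (myGalois γ hpart _ a).mp hlt
    have h6 : ¬ (a + 1 < conjFun γ (z + a + 1).toNat) := by
      intro h
      exact absurd ((myGalois γ hpart _ (a + 1)).mpr h) (by omega)
    have h7 : conjFun γ (z + a + 1).toNat = a + 1 := by omega
    rw [h7]
    omega

/-- In a `(k+1)`-core, the bead set is closed under subtracting `k+1`. -/
lemma myClosure (k : ℕ) (γ : ℕ → ℕ) (hpart : IsPartitionFun γ)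
    (hcore : IsCore (k + 1) γ) (a : ℕ) :
    ∃ b : ℕ, (γ b : ℤ) - 1 - b = (γ a : ℤ) - 1 - a - (k + 1) := by
  rcases myCover γ hpart ((γ a : ℤ) - 1 - a - (k + 1)) with h | ⟨c, hc⟩
  · exact h
  exfalso
  have hlt : c < γ a := by
    by_contra h
    push_neg at h
    have h1 : conjFun γ c ≤ a := by
      by_contra h2
      push_neg at h2
      exact absurd ((myGalois γ hpart c a).mpr h2) (not_lt.mpr h)
    omega
  have hn : a < conjFun γ c := (myGalois γ hpart c a).mp hlt
  have hH : hookLen γ a c = k + 1 := by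
    have hIoo : {i' : ℕ | a < i' ∧ c < γ i'} = Set.Ioo a (conjFun γ c) := by
      ext r
      simp [Set.mem_Ioo, myGalois γ hpart c r]
    rw [hookLen, hIoo, ← Finset.coe_Ioo, Set.ncard_coe_finset, Nat.card_Ioo]
    omega
  exact hcore a c hlt hH

/-- Iterated closure. -/
lemma myClosureIter (k : ℕ) (γ : ℕ → ℕ) (hpart : IsPartitionFun γ)
    (hcore : IsCore (k + 1) γ) (a m : ℕ) :
    ∃ b : ℕ, (γ b : ℤ) - 1 - b = (γ a : ℤ) - 1 - a - m * (k + 1) := by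
  induction m with
  | zero => exact ⟨a, by simp⟩
  | succ m ih =>
    obtain ⟨b, hb⟩ := ih
    obtain ⟨b2, hb2⟩ := myClosure k γ hpart hcore b
    refine ⟨b2, ?_⟩
    rw [hb2, hb]
    push_cast
    ring

/-- Let `c = (i,j)` and `c' = (i',j')` be extremal cells of a `(k+1)`-core with the same
`(k+1)`-residue, `c'` weakly north-west of `c`.  If `c` is the last cell of its row,
then so is `c'`. -/
theorem stmt6 (k : ℕ) (γ : ℕ → ℕ) (hpart : IsPartitionFun γ) (hcore : IsCore (k + 1) γ)
    (i j i' j' : ℕ)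
    (hc : j < γ i) (hext : γ (i + 1) ≤ j + 1)
    (hc' : j' < γ i') (hext' : γ (i' + 1) ≤ j' + 1)
    (hres : res k i j = res k i' j')
    (hnw : i ≤ i' ∧ j' ≤ j)
    (hlast : γ i = j + 1) :
    γ i' = j' + 1 := by
  by_contra hne
  have hlt' : j' + 1 < γ i' := by omega
  have h1 : i' < conjFun γ (j' + 1) := (myGalois γ hpart _ _).mp hlt'
  have h2 : ¬ (i' + 1 < conjFun γ (j' + 1)) := by
    intro h
    have := (myGalois γ hpart (j' + 1) (i' + 1)).mpr h
    omega
  have hconj : conjFun γ (j' + 1) = i' + 1 := by omega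
  have hdvd : ((k : ℤ) + 1) ∣ ((j : ℤ) - i) - ((j' : ℤ) - i') := by
    have hz : ((((j : ℤ) - i) - ((j' : ℤ) - i') : ℤ) : ZMod (k + 1)) = 0 := by
      push_cast
      rw [sub_eq_zero]
      simpa [res] using hres
    have := (ZMod.intCast_zmod_eq_zero_iff_dvd _ (k + 1)).mp hz
    exact_mod_cast this
  obtain ⟨m, hm⟩ := hdvd
  have hD0 : (0 : ℤ) ≤ ((j : ℤ) - i) - ((j' : ℤ) - i') := by omega
  have hm0 : (0 : ℤ) ≤ m := by
    by_contra h
    push_neg at h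
    have : ((k : ℤ) + 1) * m < 0 := mul_neg_of_pos_of_neg (by positivity) h
    linarith
  obtain ⟨b, hb⟩ := myClosureIter k γ hpart hcore i m.toNat
  apply myDisj γ hpart b (j' + 1)
  rw [hb, hconj]
  have hmt : ((m.toNat : ℕ) : ℤ) = m := Int.toNat_of_nonneg hm0
  rw [hlast]
  push_cast [hmt]
  linarith [hm]
end

section
/- A (k+1)-core never has both a removable corner and an addable corner of the same (k+1)-residue. -/
open scoped Classical

/-- `(i,j)` is a removable corner of `γ`. -/
def RemovableCorner (γ : ℕ → ℕ) (i j : ℕ) : Prop :=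
  j + 1 = γ i ∧ γ (i + 1) ≤ j

/-- `(i,j)` is an addable corner of `γ`. -/
def AddableCorner (γ : ℕ → ℕ) (i j : ℕ) : Prop :=
  j = γ i ∧ (i = 0 ∨ γ i < γ (i - 1))

lemma core_step (k : ℕ) (γ : ℕ → ℕ) (hpart : IsPartitionFun γ) (hcore : IsCore (k + 1) γ)
    (i : ℕ) : ∃ i', (γ i : ℤ) - i - ((k : ℤ) + 1) = (γ i' : ℤ) - i' := by
  by_contra hcon
  push_neg at hcon
  obtain ⟨hdec, N, hN⟩ := hpart
  have hanti : Antitone γ := antitone_nat_of_succ_le hdec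
  have hβanti : ∀ p q : ℕ, p ≤ q → (γ q : ℤ) - q ≤ (γ p : ℤ) - p := by
    intro p q hpq
    have := hanti hpq
    omega
  set y : ℤ := (γ i : ℤ) - i - ((k : ℤ) + 1) with hy
  have hex : ∃ M, (γ M : ℤ) - M < y := by
    refine ⟨N + (k + 2) + y.natAbs, ?_⟩
    rw [hN _ (by omega)]
    omega
  set M := Nat.find hex with hMdef
  have hM : (γ M : ℤ) - M < y := Nat.find_spec hex
  have hbelow : ∀ i', i' < M → y < (γ i' : ℤ) - i' := by
    intro i' hi'
    have h1 := Nat.find_min hex hi'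
    have h2 := hcon i'
    omega
  have hiM : i < M := by
    by_contra hle
    push_neg at hle
    have := hβanti M i hle
    omega
  have hM1 : y + 1 ≤ (γ (M - 1) : ℤ) - (M - 1) := by
    have := hbelow (M - 1) (by omega)
    omega
  have hj0 : 0 ≤ y + M - 1 := by omega
  set j : ℕ := (y + M - 1).toNat with hjdef
  have hj : (j : ℤ) = y + M - 1 := Int.toNat_of_nonneg hj0
  have hjγi : j < γ i := by
    have h1 : γ (M - 1) ≤ γ i := hanti (by omega)
    omega
  have hset : {i' : ℕ | i < i' ∧ j < γ i'} = Set.Ioo i M := by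
    ext i'
    simp only [Set.mem_setOf_eq, Set.mem_Ioo]
    constructor
    · rintro ⟨h1, h2⟩
      refine ⟨h1, ?_⟩
      by_contra hge
      push_neg at hge
      have := hanti hge
      omega
    · rintro ⟨h1, h2⟩
      refine ⟨h1, ?_⟩
      have := hanti (show i' ≤ M - 1 by omega)
      omega
  have hcard : Set.ncard {i' : ℕ | i < i' ∧ j < γ i'} = M - i - 1 := by
    rw [hset, show Set.Ioo i M = ↑(Finset.Ioo i M) by simp, Set.ncard_coe_finset,
      Nat.card_Ioo]
  have hhook : hookLen γ i j = k + 1 := by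
    rw [hookLen, hcard]
    omega
  exact hcore i j hjγi hhook

lemma core_iter (k : ℕ) (γ : ℕ → ℕ) (hpart : IsPartitionFun γ) (hcore : IsCore (k + 1) γ) :
    ∀ (n : ℕ) (i : ℕ), ∃ i', (γ i : ℤ) - i - (n : ℤ) * ((k : ℤ) + 1) = (γ i' : ℤ) - i' := by
  intro n
  induction n with
  | zero => intro i; exact ⟨i, by push_cast; ring⟩
  | succ n ih =>
    intro i
    obtain ⟨i', hi'⟩ := ih i
    obtain ⟨i'', hi''⟩ := core_step k γ hpart hcore i'
    refine ⟨i'', ?_⟩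
    push_cast
    linarith

/-- A `(k+1)`-core never has both a removable corner and an addable corner of the same
`(k+1)`-residue. -/
theorem stmt7 (k : ℕ) (γ : ℕ → ℕ) (hpart : IsPartitionFun γ) (hcore : IsCore (k + 1) γ) :
    ¬ ∃ a b c d, RemovableCorner γ a b ∧ AddableCorner γ c d ∧ res k a b = res k c d := by
  rintro ⟨a, b, c, d, ⟨hb1, hb2⟩, ⟨hd1, hd2⟩, hres⟩
  have hanti : Antitone γ := antitone_nat_of_succ_le hpart.1
  have hβanti : ∀ p q : ℕ, p ≤ q → (γ q : ℤ) - q ≤ (γ p : ℤ) - p := by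
    intro p q hpq
    have := hanti hpq
    omega
  -- `b - a` is not a beta-number
  have hx1 : ∀ i, (b : ℤ) - a ≠ (γ i : ℤ) - i := by
    intro i hEq
    rcases le_or_gt i a with h | h
    · have := hβanti i a h
      omega
    · have := hβanti (a + 1) i h
      omega
  -- `d + 1 - c` is not a beta-number
  have hy : ∀ i, (d : ℤ) + 1 - c ≠ (γ i : ℤ) - i := by
    intro i hEq
    have hic : i < c := by
      by_contra hge
      push_neg at hge
      have := hβanti c i hge
      omega
    rcases hd2 with h0 | hlt
    · omega
    · have := hanti (show i ≤ c - 1 by omega)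
      omega
  -- residue equality gives divisibility
  have hdvd : ((k : ℤ) + 1) ∣ ((b : ℤ) - a) - ((d : ℤ) - c) := by
    have h0 : ((((b : ℤ) - a) - ((d : ℤ) - c) : ℤ) : ZMod (k + 1)) = 0 := by
      push_cast
      rw [sub_eq_zero]
      exact hres
    have h1 := (ZMod.intCast_zmod_eq_zero_iff_dvd _ (k + 1)).mp h0
    exact_mod_cast h1
  obtain ⟨m, hm⟩ := hdvd
  have hba : (γ a : ℤ) = (b : ℤ) + 1 := by exact_mod_cast hb1.symm
  have hdc : (γ c : ℤ) = (d : ℤ) := by exact_mod_cast hd1.symm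
  rcases lt_trichotomy m 0 with hm0 | hm0 | hm0
  · -- from `d - c ∈ B` descend to `b - a`
    obtain ⟨i', hi'⟩ := core_iter k γ hpart hcore (-m).toNat c
    apply hx1 i'
    rw [← hi']
    have h1 : (((-m).toNat : ℕ) : ℤ) = -m := Int.toNat_of_nonneg (by omega)
    rw [h1]
    linarith [hm]
  · apply hy a
    have hm' : (b : ℤ) - a - ((d : ℤ) - c) = 0 := by rw [hm, hm0, mul_zero]
    omega
  · -- from `b + 1 - a ∈ B` descend to `d + 1 - c`
    obtain ⟨i', hi'⟩ := core_iter k γ hpart hcore m.toNat a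
    apply hy i'
    rw [← hi']
    have h1 : ((m.toNat : ℕ) : ℤ) = m := Int.toNat_of_nonneg hm0.le
    rw [h1]
    linarith [hm]
end

section
/- Let γ be a (k+1)-core with at least one removable corner of (k+1)-residue i. Then the shape obtained from γ by deleting all removable corners of residue i is again a (k+1)-core. -/
open scoped Classical

/-- The shape obtained from `γ` by deleting all removable corners of residue `r`. -/
noncomputable def removeAll (k : ℕ) (r : ZMod (k + 1)) (γ : ℕ → ℕ) : ℕ → ℕ :=
  fun i => γ i - (if 0 < γ i ∧ γ (i + 1) < γ i ∧ res k i (γ i - 1) = r then 1 else 0)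

namespace Stmt10Aux

/-- Beta number of row `i`. -/
def bet (p : ℕ → ℕ) (i : ℕ) : ℤ := (p i : ℤ) - 1 - (i : ℤ)

/-- The beta-set of `p`. -/
def Bset (p : ℕ → ℕ) : Set ℤ := Set.range (bet p)

/-- Co-beta number of column `j`. -/
noncomputable def alp (p : ℕ → ℕ) (j : ℕ) : ℤ := (j : ℤ) - (conjFun p j : ℤ)

variable {p : ℕ → ℕ}

lemma anti (hp : IsPartitionFun p) : Antitone p :=
  antitone_nat_of_succ_le hp.1

lemma bet_anti (hp : IsPartitionFun p) {i i' : ℕ} (h : i ≤ i') : bet p i' ≤ bet p i := by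
  have h1 : p i' ≤ p i := anti hp h
  simp only [bet]; omega

lemma bet_lt (hp : IsPartitionFun p) {i i' : ℕ} (h : i < i') : bet p i' < bet p i := by
  have h1 : p i' ≤ p i := anti hp h.le
  simp only [bet]; omega

lemma finite_col (hp : IsPartitionFun p) (j : ℕ) : {i : ℕ | j < p i}.Finite := by
  obtain ⟨N, hN⟩ := hp.2
  apply Set.Finite.subset (Set.finite_Iio N)
  intro i hi
  simp only [Set.mem_setOf_eq] at hi
  simp only [Set.mem_Iio]
  by_contra h
  have := hN i (by omega)
  omega

lemma finite_hookset (hp : IsPartitionFun p) (i j : ℕ) :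
    {i' : ℕ | i < i' ∧ j < p i'}.Finite :=
  (finite_col hp j).subset (fun _ hx => hx.2)

lemma conj_ge (hp : IsPartitionFun p) {i j : ℕ} (h : j < p i) : i + 1 ≤ conjFun p j := by
  have hsub : (↑(Finset.range (i+1)) : Set ℕ) ⊆ {i' : ℕ | j < p i'} := by
    intro i' hi'
    simp only [Finset.coe_range, Set.mem_Iio] at hi'
    exact Set.mem_setOf_eq ▸ lt_of_lt_of_le h (anti hp (by omega))
  calc i + 1 = (↑(Finset.range (i+1)) : Set ℕ).ncard := by
        rw [Set.ncard_coe_finset, Finset.card_range]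
    _ ≤ conjFun p j := Set.ncard_le_ncard hsub (finite_col hp j)

lemma conj_le (hp : IsPartitionFun p) {i j : ℕ} (h : p i ≤ j) : conjFun p j ≤ i := by
  have hsub : {i' : ℕ | j < p i'} ⊆ (↑(Finset.range i) : Set ℕ) := by
    intro i' hi'
    simp only [Set.mem_setOf_eq] at hi'
    simp only [Finset.coe_range, Set.mem_Iio]
    by_contra h'
    have := anti hp (le_of_not_gt h')
    omega
  calc conjFun p j ≤ (↑(Finset.range i) : Set ℕ).ncard :=
        Set.ncard_le_ncard hsub (Finset.finite_toSet _)
    _ = i := by rw [Set.ncard_coe_finset, Finset.card_range]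

lemma hook_cast (hp : IsPartitionFun p) {i j : ℕ} (h : j < p i) :
    (hookLen p i j : ℤ) = bet p i - alp p j := by
  have hT : {i' : ℕ | i < i' ∧ j < p i'}.Finite := finite_hookset hp i j
  have hS : {i' : ℕ | j < p i'}
      = (↑(Finset.range (i+1)) : Set ℕ) ∪ {i' : ℕ | i < i' ∧ j < p i'} := by
    ext i'
    simp only [Set.mem_setOf_eq, Set.mem_union, Finset.coe_range, Set.mem_Iio,
      Nat.lt_succ_iff]
    constructor
    · intro hj
      by_cases hii : i' ≤ i
      · exact Or.inl hii
      · exact Or.inr ⟨by omega, hj⟩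
    · rintro (hii | ⟨_, hj⟩)
      · exact lt_of_lt_of_le h (anti hp hii)
      · exact hj
  have hdisj : Disjoint (↑(Finset.range (i+1)) : Set ℕ) {i' : ℕ | i < i' ∧ j < p i'} := by
    rw [Set.disjoint_left]
    intro a ha hb
    simp only [Finset.coe_range, Set.mem_Iio, Nat.lt_succ_iff] at ha
    exact absurd hb.1 (by omega)
  have hcard : conjFun p j = (i+1) + Set.ncard {i' : ℕ | i < i' ∧ j < p i'} := by
    show Set.ncard {i : ℕ | j < p i} = _
    rw [hS, Set.ncard_union_eq hdisj (Finset.finite_toSet _) hT, Set.ncard_coe_finset,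
      Finset.card_range]
  simp only [hookLen, alp, bet]
  have hle : j ≤ p i := h.le
  push_cast
  omega

lemma alp_lt_bet (hp : IsPartitionFun p) {i j : ℕ} (h : j < p i) : alp p j < bet p i := by
  have := conj_ge hp h
  simp only [alp, bet]; omega

lemma bet_lt_alp (hp : IsPartitionFun p) {i j : ℕ} (h : p i ≤ j) : bet p i < alp p j := by
  have := conj_le hp h
  simp only [alp, bet]; omega

lemma alp_notMem (hp : IsPartitionFun p) (j : ℕ) : alp p j ∉ Bset p := by
  rintro ⟨i, hi⟩
  rcases lt_or_ge j (p i) with h | h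
  · have := alp_lt_bet hp h; omega
  · have := bet_lt_alp hp h; omega

lemma mem_or_alp (hp : IsPartitionFun p) (n : ℤ) :
    n ∈ Bset p ∨ ∃ j, alp p j = n := by
  by_cases hB : n ∈ Bset p
  · exact Or.inl hB
  right
  have hex : ∃ i, bet p i ≤ n := by
    refine ⟨p 0 + n.natAbs, ?_⟩
    have h1 : p (p 0 + n.natAbs) ≤ p 0 := anti hp (by omega)
    simp only [bet]
    omega
  classical
  set i₀ := Nat.find hex with hi₀
  have h1 : bet p i₀ ≤ n := Nat.find_spec hex
  have h2 : ∀ i, i < i₀ → n < bet p i := by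
    intro i hi
    exact lt_of_not_ge (Nat.find_min hex hi)
  have hne : bet p i₀ ≠ n := fun h => hB ⟨i₀, h⟩
  have h1' : bet p i₀ < n := lt_of_le_of_ne h1 hne
  have hn0 : 0 ≤ n + (i₀ : ℤ) := by
    have : (p i₀ : ℤ) - 1 - (i₀ : ℤ) < n := h1'
    omega
  refine ⟨(n + (i₀ : ℤ)).toNat, ?_⟩
  have hj : (((n + (i₀ : ℤ)).toNat : ℕ) : ℤ) = n + (i₀ : ℤ) := Int.toNat_of_nonneg hn0
  have hc : conjFun p (n + (i₀ : ℤ)).toNat = i₀ := by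
    show Set.ncard {i' : ℕ | (n + (i₀ : ℤ)).toNat < p i'} = i₀
    have hset : {i' : ℕ | (n + (i₀ : ℤ)).toNat < p i'} = (↑(Finset.range i₀) : Set ℕ) := by
      ext i'
      simp only [Set.mem_setOf_eq, Finset.coe_range, Set.mem_Iio]
      constructor
      · intro hlt
        by_contra h'
        have hle : i₀ ≤ i' := le_of_not_gt h'
        have hpi : p i' ≤ p i₀ := anti hp hle
        have : ((n + (i₀ : ℤ)).toNat : ℤ) < (p i' : ℤ) := by exact_mod_cast hlt
        have hb : (p i₀ : ℤ) - 1 - (i₀ : ℤ) < n := h1'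
        omega
      · intro hlt
        have hi₀pos : 0 < i₀ := Nat.pos_of_ne_zero (by omega)
        have hle : i' ≤ i₀ - 1 := by omega
        have hpi : p (i₀ - 1) ≤ p i' := anti hp hle
        have hb := h2 (i₀ - 1) (by omega)
        have hb' : n < (p (i₀ - 1) : ℤ) - 1 - ((i₀ - 1 : ℕ) : ℤ) := hb
        have hcast : ((i₀ - 1 : ℕ) : ℤ) = (i₀ : ℤ) - 1 := by omega
        show (n + (i₀ : ℤ)).toNat < p i'
        omega
    rw [hset, Set.ncard_coe_finset, Finset.card_range]
  simp only [alp, hc, hj]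
  ring

lemma closed_of_core {m : ℕ} (hp : IsPartitionFun p) (hc : IsCore (m + 1) p) :
    ∀ n ∈ Bset p, n - ((m : ℤ) + 1) ∈ Bset p := by
  rintro n ⟨i, hi⟩
  by_contra hn
  rcases mem_or_alp hp (n - ((m : ℤ) + 1)) with h | ⟨j, hj⟩
  · exact hn h
  have hjp : j < p i := by
    by_contra h'
    have := bet_lt_alp hp (le_of_not_gt h')
    omega
  have hh := hook_cast hp hjp
  rw [hi, hj] at hh
  have : hookLen p i j = m + 1 := by omega
  exact hc i j hjp this

lemma core_of_closed {m : ℕ} (hp : IsPartitionFun p)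
    (hcl : ∀ n ∈ Bset p, n - ((m : ℤ) + 1) ∈ Bset p) : IsCore (m + 1) p := by
  intro i j hj heq
  have h1 := hook_cast hp hj
  have h2 := hcl (bet p i) ⟨i, rfl⟩
  have h3 : alp p j = bet p i - ((m : ℤ) + 1) := by
    rw [heq] at h1
    push_cast at h1
    omega
  exact alp_notMem hp j (h3 ▸ h2)

section Removal

variable (k : ℕ) (r : ZMod (k + 1)) (γ : ℕ → ℕ)

/-- The removal condition in terms of beta numbers. -/
def RemC (n : ℤ) : Prop := (n - 1) ∉ Bset γ ∧ ((n : ZMod (k + 1)) = r)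

variable {k r γ}

lemma corner_iff (hγ : IsPartitionFun γ) (i : ℕ) :
    (0 < γ i ∧ γ (i + 1) < γ i) ↔ bet γ i - 1 ∉ Bset γ := by
  constructor
  · rintro ⟨h0, h1⟩ ⟨i', hi'⟩
    rcases Nat.lt_or_ge i' (i + 1) with h | h
    · have := bet_anti hγ (by omega : i' ≤ i)
      omega
    · have hb := bet_anti hγ h
      have hb2 : bet γ (i + 1) ≤ bet γ i - 2 := by
        simp only [bet]; push_cast; omega
      omega
  · intro h
    by_contra hnot
    push_neg at hnot
    have heq : γ (i + 1) = γ i := by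
      have := hγ.1 i
      rcases Nat.eq_zero_or_pos (γ i) with h0 | h0
      · omega
      · have := hnot h0; omega
    exact h ⟨i + 1, by simp only [bet]; push_cast; omega⟩

lemma R_iff (hγ : IsPartitionFun γ) (i : ℕ) :
    (0 < γ i ∧ γ (i + 1) < γ i ∧ res k i (γ i - 1) = r) ↔ RemC k r γ (bet γ i) := by
  constructor
  · rintro ⟨h0, h1, h2⟩
    refine ⟨(corner_iff hγ i).1 ⟨h0, h1⟩, ?_⟩
    have hc : ((γ i - 1 : ℕ) : ZMod (k + 1)) = ((γ i : ℕ) : ZMod (k + 1)) - 1 := by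
      rw [Nat.cast_sub h0]; simp
    simp only [res] at h2
    rw [hc] at h2
    show (((γ i : ℤ) - 1 - (i : ℤ) : ℤ) : ZMod (k + 1)) = r
    push_cast
    exact h2
  · rintro ⟨hnb, hres⟩
    have hcorner := (corner_iff hγ i).2 hnb
    refine ⟨hcorner.1, hcorner.2, ?_⟩
    have hc : ((γ i - 1 : ℕ) : ZMod (k + 1)) = ((γ i : ℕ) : ZMod (k + 1)) - 1 := by
      rw [Nat.cast_sub hcorner.1]; simp
    simp only [res]
    rw [hc]
    have : (((γ i : ℤ) - 1 - (i : ℤ) : ℤ) : ZMod (k + 1)) = r := hres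
    push_cast at this
    exact this

lemma bet_removeAll (hγ : IsPartitionFun γ) (i : ℕ) :
    bet (removeAll k r γ) i = bet γ i - (if RemC k r γ (bet γ i) then 1 else 0) := by
  by_cases h : (0 < γ i ∧ γ (i + 1) < γ i ∧ res k i (γ i - 1) = r)
  · have h' : RemC k r γ (bet γ i) := (R_iff hγ i).1 h
    have h0 : 0 < γ i := h.1
    have hr : removeAll k r γ i = γ i - 1 := by
      unfold removeAll; rw [if_pos h]
    rw [if_pos h']
    simp only [bet, hr]
    omega
  · have h' : ¬ RemC k r γ (bet γ i) := fun hh => h ((R_iff hγ i).2 hh)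
    have hr : removeAll k r γ i = γ i := by
      unfold removeAll; rw [if_neg h]; omega
    rw [if_neg h']
    simp only [bet, hr]
    ring

lemma part_removeAll (hγ : IsPartitionFun γ) : IsPartitionFun (removeAll k r γ) := by
  constructor
  · intro i
    simp only [removeAll]
    by_cases h1 : (0 < γ i ∧ γ (i + 1) < γ i ∧ res k i (γ i - 1) = r)
    · rw [if_pos h1]
      have := h1.2.1
      omega
    · rw [if_neg h1]
      have := hγ.1 i
      omega
  · obtain ⟨N, hN⟩ := hγ.2
    exact ⟨N, fun i hi => by simp only [removeAll, hN i hi]; omega⟩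

lemma mem_Bdelta (hγ : IsPartitionFun γ) (n : ℤ) :
    n ∈ Bset (removeAll k r γ) ↔
      (n ∈ Bset γ ∧ ¬ RemC k r γ n) ∨ ((n + 1) ∈ Bset γ ∧ RemC k r γ (n + 1)) := by
  constructor
  · rintro ⟨i, hi⟩
    rw [bet_removeAll hγ i] at hi
    by_cases h : RemC k r γ (bet γ i)
    · rw [if_pos h] at hi
      right
      have : n + 1 = bet γ i := by omega
      exact ⟨⟨i, this.symm⟩, this ▸ h⟩
    · rw [if_neg h] at hi
      left
      have : n = bet γ i := by omega
      exact ⟨⟨i, this.symm⟩, this ▸ h⟩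
  · rintro (⟨⟨i, hi⟩, h⟩ | ⟨⟨i, hi⟩, h⟩)
    · refine ⟨i, ?_⟩
      rw [bet_removeAll hγ i, hi, if_neg h]
      omega
    · refine ⟨i, ?_⟩
      rw [bet_removeAll hγ i, hi, if_pos h]
      omega

lemma natCastK : ((k : ZMod (k + 1)) + 1) = 0 := by
  have := ZMod.natCast_self (k + 1)
  push_cast at this
  exact this

lemma closed_removeAll (hγ : IsPartitionFun γ)
    (hcl : ∀ n ∈ Bset γ, n - ((k : ℤ) + 1) ∈ Bset γ) :
    ∀ n ∈ Bset (removeAll k r γ), n - ((k : ℤ) + 1) ∈ Bset (removeAll k r γ) := by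
  intro n hn
  have hKz : (((k : ℤ) + 1 : ℤ) : ZMod (k + 1)) = 0 := by
    push_cast
    exact natCastK
  rw [mem_Bdelta hγ] at hn ⊢
  rcases hn with ⟨hB, hR⟩ | ⟨hB, hR⟩
  · left
    refine ⟨hcl n hB, ?_⟩
    rintro ⟨hRem1, hRem2⟩
    have hres : ((n : ℤ) : ZMod (k + 1)) = r := by
      have h' : ((n - ((k : ℤ) + 1) : ℤ) : ZMod (k + 1)) = r := hRem2
      rw [Int.cast_sub, hKz, sub_zero] at h'
      exact h'
    have hn1 : n - 1 ∈ Bset γ := by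
      by_contra h
      exact hR ⟨h, hres⟩
    have h2 := hcl (n - 1) hn1
    have heq : n - 1 - ((k : ℤ) + 1) = n - ((k : ℤ) + 1) - 1 := by ring
    rw [heq] at h2
    exact hRem1 h2
  · have hnK1 : n + 1 - ((k : ℤ) + 1) ∈ Bset γ := hcl _ hB
    by_cases hcase : n - ((k : ℤ) + 1) ∈ Bset γ
    · left
      refine ⟨hcase, ?_⟩
      rintro ⟨hRem1, hRem2⟩
      rcases Nat.eq_zero_or_pos k with hk | hk
      · subst hk
        have h2 := hcl _ hcase
        have heq : n - ((0 : ℕ) + 1 : ℤ) - (((0 : ℕ) : ℤ) + 1) = n - (((0 : ℕ) : ℤ) + 1) - 1 := by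
          push_cast; ring
        rw [heq] at h2
        exact hRem1 h2
      · exfalso
        have h1 : ((n + 1 : ℤ) : ZMod (k + 1)) = r := hR.2
        have h2 : ((n - ((k : ℤ) + 1) : ℤ) : ZMod (k + 1)) = r := hRem2
        rw [Int.cast_sub, hKz, sub_zero] at h2
        have e : ((n + 1 : ℤ) : ZMod (k + 1)) = ((n : ℤ) : ZMod (k + 1)) + 1 := by push_cast; ring
        rw [h1, h2] at e
        have hone : (1 : ZMod (k + 1)) = 0 := by
          have := left_eq_add.mp e
          exact this
        have hdvd : (k + 1) ∣ 1 := by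
          have := (ZMod.natCast_eq_zero_iff 1 (k + 1)).mp (by exact_mod_cast hone)
          exact this
        have := Nat.le_of_dvd one_pos hdvd
        omega
    · right
      have heq : n - ((k : ℤ) + 1) + 1 = n + 1 - ((k : ℤ) + 1) := by ring
      refine ⟨heq ▸ hnK1, ?_⟩
      constructor
      · rw [show n - ((k : ℤ) + 1) + 1 - 1 = n - ((k : ℤ) + 1) by ring]
        exact hcase
      · have h1 : ((n + 1 : ℤ) : ZMod (k + 1)) = r := hR.2
        rw [heq, Int.cast_sub, hKz, sub_zero]
        exact h1

end Removal

end Stmt10Aux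

set_option linter.unusedVariables false in
/-- If a `(k+1)`-core has a removable corner of residue `r`, then deleting all removable
corners of residue `r` yields again a `(k+1)`-core. -/
theorem stmt10 (k : ℕ) (r : ZMod (k + 1)) (γ : ℕ → ℕ)
    (hpart : IsPartitionFun γ) (hcore : IsCore (k + 1) γ)
    (hex : ∃ i, 0 < γ i ∧ γ (i + 1) < γ i ∧ res k i (γ i - 1) = r) :
    IsPartitionFun (removeAll k r γ) ∧ IsCore (k + 1) (removeAll k r γ) := by
  have hpart' := Stmt10Aux.part_removeAll (k := k) (r := r) hpart
  refine ⟨hpart', ?_⟩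
  have hcl := Stmt10Aux.closed_of_core (m := k) hpart hcore
  exact Stmt10Aux.core_of_closed hpart' (Stmt10Aux.closed_removeAll hpart hcl)
end

section
/- Let γ ⊆ δ be (k+1)-cores with γ ≠ δ. Consider the leftmost column of the skew diagram δ/γ that contains more than one cell (assuming such a column exists), and let b be the topmost cell of δ/γ in that column. Then b is a rowadder: no cell of δ/γ is a (k+1)-predecessor of b. -/
open scoped Classical

/-- Let `γ ⊆ δ` be `(k+1)`-cores.  If `ℓ` is the leftmost column of `δ/γ` containing
more than one cell and `b = (ib, ℓ)` is the topmost cell of `δ/γ` in that column, then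
`b` is a rowadder: no cell of `δ/γ` is a `(k+1)`-predecessor of `b`. -/
theorem stmt15 (k : ℕ) (γ δ : ℕ → ℕ)
    (hγ : IsPartitionFun γ) (hγcore : IsCore (k + 1) γ)
    (hδ : IsPartitionFun δ) (hδcore : IsCore (k + 1) δ)
    (hsub : ∀ i, γ i ≤ δ i)
    (ℓ ib : ℕ)
    (hcol : ∃ i i', i ≠ i' ∧ γ i ≤ ℓ ∧ ℓ < δ i ∧ γ i' ≤ ℓ ∧ ℓ < δ i')
    (hleft : ∀ c < ℓ, ¬ ∃ i i', i ≠ i' ∧ γ i ≤ c ∧ c < δ i ∧ γ i' ≤ c ∧ c < δ i')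
    (hb : γ ib ≤ ℓ ∧ ℓ < δ ib)
    (htop : ∀ i, ib < i → ¬ (γ i ≤ ℓ ∧ ℓ < δ i)) :
    ¬ ∃ i j, γ i ≤ j ∧ j < δ i ∧ (j : ℤ) - i = (ℓ : ℤ) - ib - (k + 1) := by
  obtain ⟨hb1, hb2⟩ := hb
  rintro ⟨i, j, hγij, hδij, hdiag⟩
  -- monotonicity
  have hγanti : ∀ a b : ℕ, a ≤ b → γ b ≤ γ a := by
    intro a b h
    induction h with
    | refl => exact le_refl _
    | step _ ih => exact le_trans (hγ.1 _) ih
  have hδanti : ∀ a b : ℕ, a ≤ b → δ b ≤ δ a := by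
    intro a b h
    induction h with
    | refl => exact le_refl _
    | step _ ih => exact le_trans (hδ.1 _) ih
  -- from hcol and htop, get a second row i₂ < ib in column ℓ
  obtain ⟨x, y, hxy, hx1, hx2, hy1, hy2⟩ := hcol
  have hxle : x ≤ ib := by
    by_contra h
    exact htop x (by omega) ⟨hx1, hx2⟩
  have hyle : y ≤ ib := by
    by_contra h
    exact htop y (by omega) ⟨hy1, hy2⟩
  obtain ⟨i₂, hi₂lt, hγi₂⟩ : ∃ i₂, i₂ < ib ∧ γ i₂ ≤ ℓ := by
    rcases lt_or_ge x ib with h | h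
    · exact ⟨x, h, hx1⟩
    · exact ⟨y, by omega, hy1⟩
  have hib1 : 1 ≤ ib := by omega
  rcases lt_or_ge i ib with hlt | hge
  · -- easy case: two cells in column j < ℓ (rows i and i+1)
    have hjℓ : j < ℓ := by omega
    refine hleft j hjℓ ⟨i, i + 1, by omega, hγij, hδij, le_trans (hγ.1 i) hγij, ?_⟩
    have : δ ib ≤ δ (i + 1) := hδanti _ _ (by omega)
    omega
  · -- main case: i ≥ ib
    have hγi : γ i ≤ j := hγij
    have hjℓ : j < ℓ := by
      rcases eq_or_lt_of_le hge with heq | hgt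
      · omega
      · have hγiℓ : γ i ≤ ℓ := le_trans (hγanti ib i hge) hb1
        have hδiℓ : δ i ≤ ℓ := by
          by_contra h
          exact htop i hgt ⟨hγiℓ, by omega⟩
        omega
    -- every row strictly below i (in index) has γ > j
    have hrows : ∀ i', i' < i → j < γ i' := by
      intro i' hi'
      by_contra h
      push_neg at h
      have hδi' : δ i ≤ δ i' := hδanti _ _ (le_of_lt hi')
      exact hleft j hjℓ ⟨i, i', by omega, hγij, hδij, h, by omega⟩
    -- γ (ib - 1) = ℓ
    have hγtop : γ (ib - 1) = ℓ := by
      have h1 : γ (ib - 1) ≤ ℓ := le_trans (hγanti i₂ (ib - 1) (by omega)) hγi₂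
      rcases eq_or_lt_of_le h1 with h | h
      · exact h
      · exfalso
        have hγib : γ ib ≤ ℓ - 1 := by
          have := hγanti (ib - 1) ib (by omega)
          omega
        have hδib1 : δ ib ≤ δ (ib - 1) := hδanti _ _ (by omega)
        exact hleft (ℓ - 1) (by omega)
          ⟨ib - 1, ib, by omega, by omega, by omega, by omega, by omega⟩
    -- the leg set of (ib - 1, j) in γ is exactly Ico ib i
    have hset : {i' : ℕ | ib - 1 < i' ∧ j < γ i'} = Set.Ico ib i := by
      ext i'
      simp only [Set.mem_setOf_eq, Set.mem_Ico]
      constructor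
      · rintro ⟨h1, h2⟩
        refine ⟨by omega, ?_⟩
        by_contra h
        push_neg at h
        have := hγanti i i' h
        omega
      · rintro ⟨h1, h2⟩
        exact ⟨by omega, hrows i' h2⟩
    have hcard : {i' : ℕ | ib - 1 < i' ∧ j < γ i'}.ncard = i - ib := by
      rw [hset, ← Finset.coe_Ico, Set.ncard_coe_finset, Nat.card_Ico]
    have hcell : j < γ (ib - 1) := by omega
    apply hγcore (ib - 1) j hcell
    unfold hookLen
    rw [hcard, hγtop]
    omega
end

section
/- Let λ ⊆ μ be k-bounded partitions such that λ^{ω_k} ⊆ μ^{ω_k} and 𝔠(μ)/𝔠(λ) is a horizontal strip. Then μ^{ω_k}/λ^{ω_k} is a vertical strip, i.e., μ^{ω_k}_r − λ^{ω_k}_r ∈ {0,1} for all r. -/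
open scoped Classical

/-!
Passing from `𝔠(λ)` to `𝔠(μ)` only adds cells, so hook lengths in a column can only grow: a cell
of column `r` whose hook in `𝔠(λ)` exceeds `k` still does so in `𝔠(μ)`. Hence column `r` of `𝔠(μ)`
contains its `k`-bounded cells together with the cells of column `r` of `𝔠(λ)` having long hooks,
while, as `𝔠(μ)/𝔠(λ)` is a horizontal strip, it is at most one cell longer than column `r` of
`𝔠(λ)`. Comparing the two counts gives `μ^{ω_k}_r ≤ λ^{ω_k}_r + 1`.
-/

lemma IsPartitionFun.finite_setOf_lt {p : ℕ → ℕ} (hp : IsPartitionFun p) (j : ℕ) :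
    {i | j < p i}.Finite := by
  obtain ⟨N, hN⟩ := hp.2
  refine (Set.finite_Iio N).subset fun i hi => Set.mem_Iio.mpr <| lt_of_not_ge fun hNi => ?_
  simp [hN i hNi] at hi

section Column

variable {p q : ℕ → ℕ} {j : ℕ}

lemma hookLen_mono (hpq : ∀ i, p i ≤ q i) (hq : {i | j < q i}.Finite) (i : ℕ) :
    hookLen p i j ≤ hookLen q i j :=
  Nat.add_le_add (Nat.sub_le_sub_right (hpq i) j)
    (Set.ncard_le_ncard (fun i' hi' => ⟨hi'.1, hi'.2.trans_le (hpq i')⟩)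
      (hq.subset fun _ hi' => hi'.2))

lemma colKB_add_ncard_long_hooks (k : ℕ) (hp : {i | j < p i}.Finite) :
    colKB k p j + {i | j < p i ∧ k < hookLen p i j}.ncard = conjFun p j := by
  have hsplit := Set.ncard_inter_add_ncard_sdiff_eq_ncard {i | j < p i} {i | hookLen p i j ≤ k} hp
  unfold colKB conjFun
  convert hsplit using 3 <;> ext i <;> simp

lemma colKB_add_ncard_long_hooks_le (hpq : ∀ i, p i ≤ q i) (hq : {i | j < q i}.Finite) (k : ℕ) :
    colKB k q j + {i | j < p i ∧ k < hookLen p i j}.ncard ≤ conjFun q j := by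
  have hlong_sub : {i | j < p i ∧ k < hookLen p i j} ⊆ {i | j < q i} :=
    fun i hi => hi.1.trans_le (hpq i)
  have hshort_sub : {i | j < q i ∧ hookLen q i j ≤ k} ⊆ {i | j < q i} := fun _ hi => hi.1
  have hdisj : Disjoint {i | j < q i ∧ hookLen q i j ≤ k} {i | j < p i ∧ k < hookLen p i j} :=
    Set.disjoint_left.mpr fun i hshort hlong =>
      ((hookLen_mono hpq hq i).trans hshort.2).not_gt hlong.2
  unfold colKB conjFun
  rw [← Set.ncard_union_eq hdisj (hq.subset hshort_sub) (hq.subset hlong_sub)]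
  exact Set.ncard_le_ncard (Set.union_subset hshort_sub hlong_sub) hq

lemma conjFun_le_add_one_of_horizontal_strip (hpq : ∀ i, p i ≤ q i) (hq : {i | j < q i}.Finite)
    (hstrip : ∀ c i i', p i ≤ c → c < q i → p i' ≤ c → c < q i' → i = i') :
    conjFun q j ≤ conjFun p j + 1 := by
  have hsub : {i | j < p i} ⊆ {i | j < q i} := fun i hi => hi.trans_le (hpq i)
  have hnew : ({i | j < q i} \ {i | j < p i}).ncard ≤ 1 :=
    (Set.ncard_le_one_iff hq.sdiff).mpr fun ha hb =>
      hstrip j _ _ (not_lt.mp ha.2) ha.1 (not_lt.mp hb.2) hb.1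
  unfold conjFun
  rw [← Set.ncard_sdiff_add_ncard_of_subset hsub hq]
  omega

end Column

theorem stmt17_general (k : ℕ) (γ δ : ℕ → ℕ)
    (hδ : IsPartitionFun δ)
    (hsub : ∀ i, γ i ≤ δ i)
    (hhoriz : ∀ c i i', γ i ≤ c → c < δ i → γ i' ≤ c → c < δ i' → i = i') :
    ∀ j, colKB k δ j ≤ colKB k γ j + 1 := by
  intro j
  have hδfin := hδ.finite_setOf_lt j
  have hγfin : {i | j < γ i}.Finite := hδfin.subset fun i hi => hi.trans_le (hsub i)
  have hδcol := colKB_add_ncard_long_hooks_le hsub hδfin k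
  have hγcol := colKB_add_ncard_long_hooks k hγfin
  have hstrip := conjFun_le_add_one_of_horizontal_strip hsub hδfin hhoriz
  omega

/-- If `lam ⊆ μ` are `k`-bounded partitions with `lam^{ω_k} ⊆ μ^{ω_k}` and
`𝔠(μ)/𝔠(lam)` a horizontal strip, then `μ^{ω_k}/lam^{ω_k}` is a vertical strip, i.e.
the parts of the `k`-conjugates differ by at most one in every row. -/
theorem stmt17 (k : ℕ) (lam μ γ δ : ℕ → ℕ)
    (hlam : IsPartitionFun lam) (hlamb : ∀ i, lam i ≤ k)
    (hμ : IsPartitionFun μ) (hμb : ∀ i, μ i ≤ k)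
    (hγ : IsPartitionFun γ) (hγcore : IsCore (k + 1) γ) (hγc : ∀ i, lam i = rowKB k γ i)
    (hδ : IsPartitionFun δ) (hδcore : IsCore (k + 1) δ) (hδc : ∀ i, μ i = rowKB k δ i)
    (hsublam : ∀ i, lam i ≤ μ i)
    (hsub : ∀ i, γ i ≤ δ i)
    (homega : ∀ j, colKB k γ j ≤ colKB k δ j)
    (hhoriz : ∀ c i i', γ i ≤ c → c < δ i → γ i' ≤ c → c < δ i' → i = i') :
    ∀ j, colKB k δ j ≤ colKB k γ j + 1 :=
  stmt17_general k γ δ hδ hsub hhoriz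
end
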